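/- arXiv:2102.04384 — 2 statements merged into one kernel-verified Lean document; each statement's English description precedes it below -/
import Mathlib

section
/- For every instance I of the rationing problem and every subset R ⊆ N, there exists a maximum size matching μ' of the reduced reservation graph B_I^{-R} such that there are no agents i, j ∈ N\R and category c ∈ C with μ'(i) = c, μ'(j) = ∅, and j ≻_c i; in particular, any matching of B_I^{-R} of maximum size that is Pareto optimal with respect to the priorities has this property. -/
open scoped Classical

/-- An instance of the rationing problem: a quota for every category and, for every
category `c`, a priority ranking `≿_c`: a total preorder on `N ∪ {∅}`, where we model
`N ∪ {∅}` as `Option N` with `none` playing the role of `∅`. -/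
structure Inst (N C : Type*) where
  quota : C → ℕ
  prio : C → Option N → Option N → Prop
  total : ∀ c x y, prio c x y ∨ prio c y x
  trans : ∀ c x y z, prio c x y → prio c y z → prio c x z

namespace Inst

variable {N C : Type*}

/-- The strict part `≻_c` of the priority ranking `≿_c`. -/
def Strict (I : Inst N C) (c : C) (x y : Option N) : Prop :=
  I.prio c x y ∧ ¬ I.prio c y x

/-- Agent `i` is eligible for category `c` if `i ≻_c ∅`. -/
def Eligible (I : Inst N C) (i : N) (c : C) : Prop :=
  I.Strict c (some i) none

end Inst

variable {N C : Type*} [Fintype N] [DecidableEq N] [DecidableEq C]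

/-- The number of matched agents of (the function) `μ`. -/
def msize (μ : N → Option C) : ℕ :=
  (Finset.univ.filter fun i => μ i ≠ none).card

/-- `μ` satisfies the capacity constraints: every category `c` is matched
to at most `quota c` agents. -/
def Inst.IsMatching (I : Inst N C) (μ : N → Option C) : Prop :=
  ∀ c, (Finset.univ.filter fun i => μ i = some c).card ≤ I.quota c

/-- A baseline ordering `≻_π`, given as a duplicate-free list of all agents,
listed from highest priority to lowest priority; so `i ≻_π j` iff
`order.indexOf i < order.indexOf j`. -/
def IsBaseline (order : List N) : Prop :=
  order.Nodup ∧ ∀ i : N, i ∈ order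

/-- `μ` is a matching of the reduced reservation graph `B_I^{-R}`: it satisfies the
capacity constraints, leaves all agents of `R` unmatched, and uses only edges `{i,c}`
with `i` eligible for `c` and no `j ∈ R` with `j ≻_c i`. -/
def Inst.MatchingOf (I : Inst N C) (R : Finset N) (μ : N → Option C) : Prop :=
  I.IsMatching μ ∧ (∀ i ∈ R, μ i = none) ∧
    ∀ i c, μ i = some c → I.Eligible i c ∧ ∀ j ∈ R, ¬ I.Strict c (some j) (some i)

/-- `ms(B_I^{-R})`: the size of a maximum size matching of the reduced reservation
graph `B_I^{-R}`. -/
noncomputable def Inst.ms (I : Inst N C) (R : Finset N) : ℕ :=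
  sSup {k | ∃ μ : N → Option C, I.MatchingOf R μ ∧ msize μ = k}

/-- The set `R_I` of agents rejected by the Reverse Rejecting (RR) rule: the agents are
considered in order of the baseline ordering from lowest to highest priority (i.e. from the
end of the list `order` to its front), and agent `i` is added to the current rejected set `R`
iff `ms(B_I^{-(R ∪ {i})}) = ms(B_I)`. -/
noncomputable def Inst.rrReject (I : Inst N C) (order : List N) : Finset N :=
  order.foldr
    (fun i R => if I.ms (insert i R) = I.ms (∅ : Finset N) then insert i R else R) ∅

/-- `μ` is a possible output of the RR rule for baseline ordering `order`:
a maximum size matching of the reduced reservation graph `B_I^{-R_I}`. -/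
def Inst.IsRROutcome (I : Inst N C) (order : List N) (μ : N → Option C) : Prop :=
  I.MatchingOf (I.rrReject order) μ ∧ msize μ = I.ms (I.rrReject order)

/-- `ν` Pareto dominates `μ` with respect to the priorities: `ν` is obtained from `μ` by
replacing matched agents by agents with weakly higher priority for the respective categories,
strictly for at least one. -/
def ParetoDominates (I : Inst N C) (ν μ : N → Option C) : Prop :=
  ∃ σ : N → N, Function.Injective σ ∧
    (∀ (i : N) (c : C), μ i = some c → ν (σ i) = some c ∧ I.prio c (some (σ i)) (some i)) ∧
    (∃ (i : N) (c : C), μ i = some c ∧ I.Strict c (some (σ i)) (some i)) ∧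
    (∀ (j : N) (c : C), ν j = some c → ∃ i : N, μ i = some c ∧ σ i = j)

-- AUX START
lemma card_filter_perm (e : Equiv.Perm N) (p : N → Prop) [DecidablePred p]
    [DecidablePred fun k => p (e k)] :
    (Finset.univ.filter fun k => p (e k)).card = (Finset.univ.filter p).card := by
  apply Finset.card_bij' (fun k _ => e k) (fun k _ => e.symm k) <;> simp

noncomputable def wtI (I : Inst N C) (k : N) : Option C → ℕ
  | none => 0
  | some c => (Finset.univ.filter fun j => I.Strict c (some k) (some j)).card

noncomputable def potI (I : Inst N C) (μ : N → Option C) : ℕ := ∑ k, wtI I k (μ k)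

lemma prio_refl (I : Inst N C) (c : C) (x : Option N) : I.prio c x x :=
  (I.total c x x).elim id id

lemma wt_lt (I : Inst N C) {c : C} {i j : N} (h : I.Strict c (some j) (some i)) :
    wtI I i (some c) < wtI I j (some c) := by
  have hsub : (Finset.univ.filter fun k => I.Strict c (some i) (some k)) ⊆
      (Finset.univ.filter fun k => I.Strict c (some j) (some k)) := by
    intro k hk
    simp only [Finset.mem_filter, Finset.mem_univ, true_and] at hk ⊢
    exact ⟨I.trans c _ _ _ h.1 hk.1, fun hkj => hk.2 (I.trans c _ _ _ hkj h.1)⟩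
  apply Finset.card_lt_card
  refine (Finset.ssubset_iff_of_subset hsub).mpr ⟨i, ?_, ?_⟩
  · simp [h]
  · simp only [Finset.mem_filter, Finset.mem_univ, true_and]
    exact fun hs => hs.2 hs.1

lemma swap_lemma (I : Inst N C) (R : Finset N) (μ : N → Option C)
    (hμ : I.MatchingOf R μ) {i j : N} {c : C} (hi : μ i = some c) (hj : μ j = none)
    (hjR : j ∉ R) (hstr : I.Strict c (some j) (some i)) :
    ∃ ν : N → Option C, I.MatchingOf R ν ∧ msize ν = msize μ ∧ potI I μ < potI I ν ∧
      ParetoDominates I ν μ := by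
  have hij : i ≠ j := fun h => by rw [h, hj] at hi; cases hi
  have hiR : i ∉ R := fun h => by rw [hμ.2.1 i h] at hi; cases hi
  set e := Equiv.swap i j with he
  refine ⟨fun k => μ (e k), ?_, ?_, ?_, ?_⟩
  · -- MatchingOf
    refine ⟨fun c' => ?_, fun r hr => ?_, fun k c' hk => ?_⟩
    · show (Finset.univ.filter fun k => μ (e k) = some c').card ≤ I.quota c'
      exact (card_filter_perm e (fun k => μ k = some c')).trans_le (hμ.1 c')
    · rcases eq_or_ne r i with rfl | hri
      · simp [e, Equiv.swap_apply_left, hj]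
      · have hrj : r ≠ j := fun h => hjR (h ▸ hr)
        simpa [e, Equiv.swap_apply_of_ne_of_ne hri hrj] using hμ.2.1 r hr
    · rcases eq_or_ne k i with rfl | hki
      · simp only [e, Equiv.swap_apply_left] at hk; rw [hj] at hk; cases hk
      rcases eq_or_ne k j with rfl | hkj
      · simp only [e, Equiv.swap_apply_right] at hk
        rw [hi] at hk
        injection hk with hc; subst hc
        have hel := (hμ.2.2 i c hi).1
        constructor
        · exact ⟨I.trans c _ _ _ hstr.1 hel.1, fun hn => hel.2 (I.trans c _ _ _ hn hstr.1)⟩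
        · intro r hr hrs
          exact (hμ.2.2 i c hi).2 r hr
            ⟨I.trans c _ _ _ hrs.1 hstr.1, fun hn => hrs.2 (I.trans c _ _ _ hstr.1 hn)⟩
      · simp only [e, Equiv.swap_apply_of_ne_of_ne hki hkj] at hk
        exact hμ.2.2 k c' hk
  · -- msize
    show (Finset.univ.filter fun k => μ (e k) ≠ none).card = _
    exact card_filter_perm e (fun k => μ k ≠ none)
  · -- pot
    have hsplit : ∀ F : N → ℕ, ∑ k, F k = F i + (F j + ∑ k ∈ (Finset.univ.erase i).erase j, F k) := by
      intro F
      rw [← Finset.add_sum_erase _ F (Finset.mem_univ i),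
        ← Finset.add_sum_erase _ F (Finset.mem_erase.mpr ⟨hij.symm, Finset.mem_univ j⟩)]
    unfold potI
    rw [hsplit (fun k => wtI I k (μ k)), hsplit (fun k => wtI I k (μ (e k)))]
    have hrest : ∑ k ∈ (Finset.univ.erase i).erase j, wtI I k (μ k)
        = ∑ k ∈ (Finset.univ.erase i).erase j, wtI I k (μ (e k)) := by
      apply Finset.sum_congr rfl
      intro k hk
      simp only [Finset.mem_erase] at hk
      rw [show e k = k from Equiv.swap_apply_of_ne_of_ne hk.2.1 hk.1]
    rw [← hrest]
    simp only [e, Equiv.swap_apply_left, Equiv.swap_apply_right, hi, hj]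
    simp only [wtI]
    have := wt_lt I hstr
    simp only [wtI] at this
    omega
  · -- ParetoDominates
    refine ⟨e, e.injective, fun k c' hk => ?_, ⟨i, c, hi, ?_⟩, fun k c' hk => ?_⟩
    · have h1 : μ (e (e k)) = some c' := by simp only [e, Equiv.swap_apply_self]; exact hk
      refine ⟨h1, ?_⟩
      rcases eq_or_ne k i with rfl | hki
      · rw [hi] at hk; injection hk with hc; subst hc
        simp only [e, Equiv.swap_apply_left]; exact hstr.1
      rcases eq_or_ne k j with rfl | hkj
      · rw [hj] at hk; cases hk
      · rw [show e k = k from Equiv.swap_apply_of_ne_of_ne hki hkj]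
        exact prio_refl I c' _
    · simp only [e, Equiv.swap_apply_left]; exact hstr
    · refine ⟨e k, hk, ?_⟩
      simp only [e, Equiv.swap_apply_self]


/-- For every `R ⊆ N` there is a maximum size matching `μ'` of `B_I^{-R}` such
that no agent of `N \ R` left unmatched by `μ'` has strictly higher priority for some
category than an agent matched to it; in particular, any maximum size matching of `B_I^{-R}`
that is Pareto optimal with respect to the priorities has this property. -/
theorem exists_max_matching_no_envy (I : Inst N C) (R : Finset N) :
    (∃ μ : N → Option C, I.MatchingOf R μ ∧ msize μ = I.ms R ∧
        ∀ (i j : N) (c : C), μ i = some c → μ j = none → j ∉ R →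
          ¬ I.Strict c (some j) (some i)) ∧
      ∀ μ : N → Option C, I.MatchingOf R μ → msize μ = I.ms R →
        (¬ ∃ ν : N → Option C, I.MatchingOf R ν ∧ ParetoDominates I ν μ) →
        ∀ (i j : N) (c : C), μ i = some c → μ j = none → j ∉ R →
          ¬ I.Strict c (some j) (some i) := by
  constructor
  · -- existence
    have h0 : I.MatchingOf R (fun _ => none) := by
      refine ⟨fun c => ?_, fun _ _ => rfl, fun k c hk => by cases hk⟩
      simp
    have hTne : {k | ∃ μ : N → Option C, I.MatchingOf R μ ∧ msize μ = k}.Nonempty :=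
      ⟨msize (fun (_ : N) => (none : Option C)), fun _ => none, h0, rfl⟩
    have hTbdd : BddAbove {k | ∃ μ : N → Option C, I.MatchingOf R μ ∧ msize μ = k} := by
      refine ⟨Fintype.card N, ?_⟩
      rintro k ⟨μ, _, rfl⟩
      exact (Finset.card_le_card (Finset.subset_univ _)).trans_eq Finset.card_univ
    have hT : I.ms R ∈ {k | ∃ μ : N → Option C, I.MatchingOf R μ ∧ msize μ = k} :=
      Nat.sSup_mem hTne hTbdd
    obtain ⟨μ0, hμ0, hs0⟩ := hT
    set M := {k | ∃ μ : N → Option C, I.MatchingOf R μ ∧ msize μ = I.ms R ∧ potI I μ = k} with hM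
    have hMne : M.Nonempty := ⟨potI I μ0, μ0, hμ0, hs0, rfl⟩
    have hMbdd : BddAbove M := by
      refine ⟨Fintype.card N * Fintype.card N, fun k ⟨μ, _, _, hk⟩ => ?_⟩
      rw [← hk]
      calc potI I μ ≤ ∑ _k : N, Fintype.card N := by
            apply Finset.sum_le_sum
            intro k _
            cases hmk : μ k with
            | none => simp [wtI]
            | some c =>
              simp only [wtI]
              exact (Finset.card_le_card (Finset.subset_univ _)).trans_eq Finset.card_univ
        _ = Fintype.card N * Fintype.card N := by simp [Finset.sum_const, mul_comm]
    obtain ⟨μ, hμ, hms, hpot⟩ := Nat.sSup_mem hMne hMbdd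
    refine ⟨μ, hμ, hms, fun i j c hi hj hjR hstr => ?_⟩
    obtain ⟨ν, hν, hνs, hνp, _⟩ := swap_lemma I R μ hμ hi hj hjR hstr
    have : potI I ν ≤ sSup M := le_csSup hMbdd ⟨ν, hν, hνs.trans hms, rfl⟩
    omega
  · -- Pareto optimal
    intro μ hμ _ hnd i j c hi hj hjR hstr
    obtain ⟨ν, hν, _, _, hd⟩ := swap_lemma I R μ hμ hi hj hjR hstr
    exact hnd ⟨ν, hν, hd⟩
end

section
/- Assume each agent is eligible for at most one preferential category and all categories' priorities are consistent with the baseline ordering. Then the outcome of the over-and-above rule (i) complies with the eligibility requirements, (ii) is a maximum beneficiary assignment, (iii) respects priorities, (iv) is non-wasteful, and (v) is order preserving for q_{c_u^1} = q_{c_u} and q_{c_u^2} = 0. -/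
open scoped Classical

variable {N C : Type*} [Fintype N] [DecidableEq N] [DecidableEq C]

/-- `μ` complies with the eligibility requirements. -/
def Complies (I : Inst N C) (μ : N → Option C) : Prop :=
  ∀ (i : N) (c : C), μ i = some c → I.Eligible i c

/-- `μ` respects priorities: no unmatched agent has strictly higher priority for some
category than an agent matched to it. -/
def RespectsPriorities (I : Inst N C) (μ : N → Option C) : Prop :=
  ¬ ∃ (i j : N) (c : C), μ i = some c ∧ μ j = none ∧ I.Strict c (some j) (some i)

/-- The number of agents matched to category `c` by `μ`. -/
def catCount (μ : N → Option C) (c : C) : ℕ :=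
  (Finset.univ.filter fun i => μ i = some c).card

/-- `μ` is non-wasteful: an eligible agent is only left unmatched if all units of the
category are used. -/
def NonWasteful (I : Inst N C) (μ : N → Option C) : Prop :=
  ∀ (i : N) (c : C), I.Eligible i c → μ i = none → catCount μ c = I.quota c

/-- The number of agents matched to a preferential category (a category other than the
unreserved category `cu`). -/
def beneCount (cu : C) (μ : N → Option C) : ℕ :=
  (Finset.univ.filter fun i => μ i ≠ none ∧ μ i ≠ some cu).card

/-- `μ` is a maximum beneficiary assignment: it maximizes the number of agents matched to
preferential categories among all matchings complying with the eligibility requirements. -/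
def MaxBene (I : Inst N C) (cu : C) (μ : N → Option C) : Prop :=
  ∀ ν : N → Option C, I.IsMatching ν → Complies I ν → beneCount cu ν ≤ beneCount cu μ

/-- The priorities are consistent with the baseline ordering: for each category the
eligible agents are ranked according to `≻_π`. -/
def Consistent (I : Inst N C) (order : List N) : Prop :=
  ∀ (c : C) (i j : N), I.Eligible i c → I.Eligible j c →
    (I.Strict c (some i) (some j) ↔ order.idxOf i < order.idxOf j)

/-- Each agent is eligible for at most one preferential category. -/
def OneCategory (I : Inst N C) (cu : C) : Prop :=
  ∀ (i : N) (c c' : C), c ≠ cu → c' ≠ cu → I.Eligible i c → I.Eligible i c' → c = c'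

/-- One step of the minimum-guarantees rule: the considered agent is matched to a
preferential category she is eligible for if a unit of it remains, and otherwise to the
unreserved category if an unreserved unit remains. -/
noncomputable def mgStep (I : Inst N C) (cu : C) (μ : N → Option C) (i : N) : N → Option C :=
  if h : ∃ c, c ≠ cu ∧ I.Eligible i c ∧ catCount μ c < I.quota c then
    Function.update μ i (some h.choose)
  else if catCount μ cu < I.quota cu then Function.update μ i (some cu)
  else μ

/-- The outcome of the minimum-guarantees rule: the agents are considered in order of the
baseline ordering from highest to lowest priority. -/
noncomputable def mgOutcome (I : Inst N C) (cu : C) (order : List N) : N → Option C :=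
  order.foldl (mgStep I cu) fun _ => none

/-- Order preservation for `q_{c_u^1} = 0` and `q_{c_u^2} = q_{c_u}` (the unreserved
category `cu` plays the role of `c_u^2`, and no agent is matched to `c_u^1`, so clause (i)
is vacuous): if `μ(j) ∈ C_p`, `i ≻_{μ(j)} j`, and `i` is eligible for `μ(j)`, then
`μ(i) ≠ c_u^2 = cu`. -/
def OrderPreservingMG (I : Inst N C) (cu : C) (μ : N → Option C) : Prop :=
  ∀ (i j : N) (ci cj : C), μ i = some ci → μ j = some cj → cj ≠ cu →
    I.Strict cj (some i) (some j) → I.Eligible i cj → ci ≠ cu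

/-- One step of the first phase of the over-and-above rule: the considered agent `i` is
matched to the unreserved category only if an unreserved unit remains and, for any
preferential category `c` that `i` is eligible for, at least `q_c` agents of `N_c` other
than `i` are still unmatched. -/
noncomputable def oaStep (I : Inst N C) (cu : C) (σ : N → Option C) (i : N) : N → Option C :=
  if catCount σ cu < I.quota cu ∧
      ∀ c : C, c ≠ cu → I.Eligible i c →
        I.quota c ≤ (Finset.univ.filter fun j => j ≠ i ∧ I.Eligible j c ∧ σ j = none).card then
    Function.update σ i (some cu)
  else σ

/-- The first phase of the over-and-above rule (allocation of the unreserved units),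
considering the agents in order of the baseline ordering from highest to lowest priority. -/
noncomputable def oaPhase1 (I : Inst N C) (cu : C) (order : List N) : N → Option C :=
  order.foldl (oaStep I cu) fun _ => none

/-- The outcome of the over-and-above rule: after the first phase, each preferential
category `c` is filled with the `min {q_c, |N_c|}` highest (baseline) priority agents of
`N_c` who are still unmatched. -/
noncomputable def oaOutcome (I : Inst N C) (cu : C) (order : List N) : N → Option C :=
  fun i =>
    if oaPhase1 I cu order i = some cu then some cu
    else if h : ∃ c, c ≠ cu ∧ I.Eligible i c ∧
        (Finset.univ.filter fun j => I.Eligible j c ∧ oaPhase1 I cu order j = none ∧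
          order.idxOf j < order.idxOf i).card < I.quota c then
      some h.choose
    else none

/-- Order preservation for `q_{c_u^1} = q_{c_u}` and `q_{c_u^2} = 0` (the unreserved
category `cu` plays the role of `c_u^1`, and no agent is matched to `c_u^2`, so clause (ii)
is vacuous): if `μ(i) ∈ C_p`, `i ≻_{μ(j)} j`, and `j` is eligible for `μ(i)`, then
`μ(j) ≠ c_u^1 = cu`. -/
def OrderPreservingOA (I : Inst N C) (cu : C) (μ : N → Option C) : Prop :=
  ∀ (i j : N) (ci cj : C), μ i = some ci → μ j = some cj → ci ≠ cu →
    I.Strict cj (some i) (some j) → I.Eligible j ci → cj ≠ cu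

/-!
Phase one hands agent `i` an unreserved unit only if, in every preferential category `c` she is
eligible for, at least `q_c` other eligible agents are still unmatched. So it never brings the
pool of unmatched agents eligible for `c` below `min q_c |N_c|`, and phase two, which gives `c`
to the pool members of rank below `q_c`, fills `min q_c |pool|` units of `c`: as many as any
eligible matching can. The other properties are read off from the state of phase one at an
agent's turn: an agent left unmatched at the end was refused an unreserved unit only because
none was left, and the pools only shrink as phase one proceeds.
-/

open Finset

omit [Fintype N] [DecidableEq N] [DecidableEq C] in
theorem Inst.Eligible.of_strict {I : Inst N C} {c : C} {i j : N} (hi : I.Eligible i c)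
    (hji : I.Strict c (some j) (some i)) : I.Eligible j c :=
  ⟨I.trans c _ _ _ hji.1 hi.1, fun h => hi.2 (I.trans c _ _ _ h hji.1)⟩

theorem card_filter_rank_lt_eq_min {α β : Type*} [LinearOrder β] (A : Finset α) {g : α → β}
    (hg : Set.InjOn g A) (q : ℕ) :
    #{a ∈ A | #{b ∈ A | g b < g a} < q} = min q #A := by
  set r : α → ℕ := fun a => #{b ∈ A | g b < g a}
  have r_lt_r : ∀ a ∈ A, ∀ a' ∈ A, g a < g a' → r a < r a' := fun a ha a' ha' h =>
    card_lt_card <| (ssubset_iff_of_subset fun b hb => by grind).2 ⟨a, by grind, by simp⟩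
  have r_injOn : Set.InjOn r A := fun a ha a' ha' h => by
    rcases lt_trichotomy (g a) (g a') with hlt | heq | hlt
    · exact absurd h (r_lt_r a ha a' ha' hlt).ne
    · exact hg ha ha' heq
    · exact absurd h (r_lt_r a' ha' a ha hlt).ne'
  have image_r : A.image r = range #A := by
    refine eq_of_subset_of_card_le (fun x hx => ?_)
      (by rw [card_image_of_injOn r_injOn, card_range])
    obtain ⟨a, ha, rfl⟩ := mem_image.1 hx
    exact mem_range.2 <| card_lt_card <| filter_ssubset.2 ⟨a, ha, lt_irrefl _⟩
  calc #{a ∈ A | r a < q} = #{x ∈ A.image r | x < q} := by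
        rw [filter_image, card_image_of_injOn (r_injOn.mono (filter_subset _ _))]
    _ = min q #A := by
        rw [image_r, ← card_range (min q #A)]
        congr 1
        ext x
        simp only [mem_filter, mem_range, lt_min_iff]
        exact and_comm

omit [DecidableEq N] in
theorem beneCount_eq_sum_catCount (cu : C) (μ : N → Option C) {T : Finset C} (hcu : cu ∉ T)
    (hT : ∀ i c, μ i = some c → c ≠ cu → c ∈ T) :
    beneCount cu μ = ∑ c ∈ T, catCount μ c := by
  rw [beneCount, card_eq_sum_card_fiberwise (f := μ) (t := T.image some) (fun i hi => ?_),
    sum_image (fun _ _ _ _ => Option.some_inj.1)]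
  · refine sum_congr rfl fun c hc => congrArg card ?_
    ext i
    simp only [mem_filter, mem_univ, true_and]
    grind
  · obtain ⟨c, hc⟩ := Option.ne_none_iff_exists'.1 (mem_filter.1 hi).2.1
    grind

omit [DecidableEq N] in
theorem beneCount_le_beneCount (cu : C) {ν μ : N → Option C}
    (h : ∀ c, c ≠ cu → catCount ν c ≤ catCount μ c) : beneCount cu ν ≤ beneCount cu μ := by
  set T := (univ.biUnion fun i => (ν i).toFinset ∪ (μ i).toFinset).erase cu
  have mem_T : ∀ ρ : N → Option C, ρ = ν ∨ ρ = μ → ∀ i c, ρ i = some c → c ≠ cu → c ∈ T := by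
    rintro ρ (rfl | rfl) i c hi hc <;> simp [T, hc] <;> exact ⟨i, by simp [hi]⟩
  rw [beneCount_eq_sum_catCount cu ν (T := T) (by simp [T]) (mem_T ν (.inl rfl)),
    beneCount_eq_sum_catCount cu μ (T := T) (by simp [T]) (mem_T μ (.inr rfl))]
  exact sum_le_sum fun c hc => h c (ne_of_mem_erase hc)

section OverAndAbove

variable (I : Inst N C) (cu : C) (order : List N)

noncomputable def eligibleUnmatched (σ : N → Option C) (c : C) : Finset N :=
  {j | I.Eligible j c ∧ σ j = none}

omit [DecidableEq N] [DecidableEq C] in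
variable {I} in
@[simp]
theorem mem_eligibleUnmatched {σ : N → Option C} {c : C} {j : N} :
    j ∈ eligibleUnmatched I σ c ↔ I.Eligible j c ∧ σ j = none := by
  simp [eligibleUnmatched]

def TakesUnreserved (σ : N → Option C) (i : N) : Prop :=
  catCount σ cu < I.quota cu ∧
    ∀ c, c ≠ cu → I.Eligible i c → I.quota c ≤ #((eligibleUnmatched I σ c).erase i)

variable {I cu}

theorem oaStep_eq_ite (σ : N → Option C) (i : N) :
    oaStep I cu σ i =
      if TakesUnreserved I cu σ i then Function.update σ i (some cu) else σ := by
  have erase_eq : ∀ c, ({j | j ≠ i ∧ I.Eligible j c ∧ σ j = none} : Finset N) =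
      (eligibleUnmatched I σ c).erase i := fun c => by
    ext j
    simp
  simp only [oaStep, erase_eq]
  exact if_congr Iff.rfl rfl rfl

theorem oaStep_apply_of_ne {σ : N → Option C} {i j : N} (h : j ≠ i) :
    oaStep I cu σ i j = σ j := by
  rw [oaStep_eq_ite]
  split_ifs <;> simp [h]

theorem foldl_oaStep_apply_of_not_mem {l : List N} {k : N} (hk : k ∉ l) (σ : N → Option C) :
    l.foldl (oaStep I cu) σ k = σ k :=
  List.foldlRecOn (motive := fun τ : N → Option C => τ k = σ k) l _ rfl fun _ hτ _ hi =>
    (oaStep_apply_of_ne (ne_of_mem_of_not_mem hi hk).symm).trans hτ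

theorem oaPhase1_eq_none_or_eq_cu (k : N) :
    oaPhase1 I cu order k = none ∨ oaPhase1 I cu order k = some cu := by
  refine List.foldlRecOn (motive := fun τ : N → Option C => τ k = none ∨ τ k = some cu)
    order _ (.inl rfl) fun τ hτ i _ => ?_
  rw [oaStep_eq_ite]
  split_ifs
  · rcases eq_or_ne k i with rfl | hne <;> simp_all
  · exact hτ

theorem catCount_oaPhase1_cu_le : catCount (oaPhase1 I cu order) cu ≤ I.quota cu := by
  refine List.foldlRecOn (motive := fun τ : N → Option C => catCount τ cu ≤ I.quota cu) order _
    (by simp [catCount]) fun τ hτ i _ => ?_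
  rw [oaStep_eq_ite]
  split_ifs with h
  · calc catCount (Function.update τ i (some cu)) cu
        ≤ #(insert i ({k | τ k = some cu} : Finset N)) := card_le_card fun k hk => by
          rcases eq_or_ne k i with rfl | hne <;> simp_all
      _ ≤ catCount τ cu + 1 := card_insert_le _ _
      _ ≤ I.quota cu := h.1
  · exact hτ

theorem min_quota_le_card_eligibleUnmatched_oaPhase1 {c : C} (hc : c ≠ cu) :
    min (I.quota c) #{j | I.Eligible j c} ≤ #(eligibleUnmatched I (oaPhase1 I cu order) c) := by
  refine List.foldlRecOn (motive := fun τ : N → Option C =>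
      min (I.quota c) #{j | I.Eligible j c} ≤ #(eligibleUnmatched I τ c))
    order _ (by simp [eligibleUnmatched]) fun τ hτ i _ => ?_
  rw [oaStep_eq_ite]
  split_ifs with h
  · by_cases hi : I.Eligible i c
    · refine (min_le_left _ _).trans ((h.2 c hc hi).trans (card_le_card fun k hk => ?_))
      rcases eq_or_ne k i with rfl | hne <;> simp_all
    · have unchanged : eligibleUnmatched I (Function.update τ i (some cu)) c =
          eligibleUnmatched I τ c := by
        ext k
        rcases eq_or_ne k i with rfl | hne
        · simp [hi]
        · simp [hne]
      rwa [unchanged]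
  · exact hτ

variable (I cu) in
noncomputable def oaPhase1Before (j : N) : N → Option C :=
  (order.take (order.idxOf j)).foldl (oaStep I cu) fun _ => none

variable {order}

theorem oaPhase1_eq_foldl_drop (j : N) : oaPhase1 I cu order =
    (order.drop (order.idxOf j)).foldl (oaStep I cu) (oaPhase1Before I cu order j) := by
  rw [oaPhase1, oaPhase1Before, ← List.foldl_append, List.take_append_drop]

theorem oaPhase1Before_apply (hb : IsBaseline order) (j k : N) :
    oaPhase1Before I cu order j k =
      if order.idxOf k < order.idxOf j then oaPhase1 I cu order k else none := by
  split_ifs with hk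
  · have hk' : k ∈ order.take (order.idxOf j) := (List.mem_take_iff_idxOf_lt (hb.2 k)).2 hk
    rw [oaPhase1_eq_foldl_drop j,
      foldl_oaStep_apply_of_not_mem (List.disjoint_take_drop hb.1 le_rfl hk')]
  · rw [oaPhase1Before,
      foldl_oaStep_apply_of_not_mem (mt (List.mem_take_iff_idxOf_lt (hb.2 k)).1 hk)]

theorem oaPhase1Before_apply_self (hb : IsBaseline order) (j : N) :
    oaPhase1Before I cu order j j = none := by
  simp [oaPhase1Before_apply hb]

theorem oaPhase1_apply (hb : IsBaseline order) (j : N) :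
    oaPhase1 I cu order j = oaStep I cu (oaPhase1Before I cu order j) j j := by
  have hj : order.idxOf j < order.length := List.idxOf_lt_length_iff.2 (hb.2 j)
  have hj' : j ∈ order.take (order.idxOf j + 1) :=
    (List.mem_take_iff_idxOf_lt (hb.2 j)).2 (Nat.lt_succ_self _)
  rw [oaPhase1_eq_foldl_drop j, List.drop_eq_getElem_cons hj, List.getElem_idxOf hj,
    List.foldl_cons, foldl_oaStep_apply_of_not_mem (List.disjoint_take_drop hb.1 le_rfl hj')]

theorem oaPhase1_eq_some_cu_iff (hb : IsBaseline order) (j : N) :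
    oaPhase1 I cu order j = some cu ↔ TakesUnreserved I cu (oaPhase1Before I cu order j) j := by
  rw [oaPhase1_apply hb, oaStep_eq_ite]
  split_ifs with h
  · simpa using h
  · simpa [oaPhase1Before_apply_self hb] using h

theorem catCount_oaPhase1Before_mono (hb : IsBaseline order) {i j : N}
    (h : order.idxOf j ≤ order.idxOf i) :
    catCount (oaPhase1Before I cu order j) cu ≤ catCount (oaPhase1Before I cu order i) cu :=
  card_le_card fun k => by simp only [mem_filter, oaPhase1Before_apply hb]; grind

theorem catCount_oaPhase1Before_le (hb : IsBaseline order) (j : N) :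
    catCount (oaPhase1Before I cu order j) cu ≤ catCount (oaPhase1 I cu order) cu :=
  card_le_card fun k => by simp only [mem_filter, oaPhase1Before_apply hb]; grind

theorem eligibleUnmatched_oaPhase1Before_anti (hb : IsBaseline order) {i j : N}
    (h : order.idxOf j ≤ order.idxOf i) (c : C) :
    eligibleUnmatched I (oaPhase1Before I cu order i) c ⊆
      eligibleUnmatched I (oaPhase1Before I cu order j) c := fun k => by
  simp only [mem_eligibleUnmatched, oaPhase1Before_apply hb]; grind

variable (I cu order) in
noncomputable def oaRank (c : C) (i : N) : ℕ :=
  #{j ∈ eligibleUnmatched I (oaPhase1 I cu order) c | order.idxOf j < order.idxOf i}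

theorem card_filter_eq_oaRank (c : C) (i : N) :
    #{j | I.Eligible j c ∧ oaPhase1 I cu order j = none ∧ order.idxOf j < order.idxOf i} =
      oaRank I cu order c i := by
  simp only [oaRank, eligibleUnmatched, filter_filter, and_assoc]

theorem oaOutcome_eq_some_cu_iff (i : N) :
    oaOutcome I cu order i = some cu ↔ oaPhase1 I cu order i = some cu := by
  unfold oaOutcome
  split_ifs with hcu hpref
  · simpa using hcu
  · simpa [hcu] using hpref.choose_spec.1
  · simpa using hcu

theorem oaOutcome_eq_some_of_ne {c : C} {i : N} (hc : c ≠ cu)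
    (h : oaOutcome I cu order i = some c) :
    i ∈ eligibleUnmatched I (oaPhase1 I cu order) c ∧ oaRank I cu order c i < I.quota c := by
  unfold oaOutcome at h
  split_ifs at h with hcu hpref
  · exact absurd (Option.some_inj.1 h) hc.symm
  · obtain ⟨-, helig, hlt⟩ := hpref.choose_spec
    rw [Option.some_inj.1 h, card_filter_eq_oaRank] at *
    have hφ := (oaPhase1_eq_none_or_eq_cu order i).resolve_right hcu
    exact ⟨mem_eligibleUnmatched.2 ⟨helig, hφ⟩, hlt⟩

theorem oaOutcome_eq_some_iff (hone : OneCategory I cu) {c : C} {i : N} (hc : c ≠ cu) :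
    oaOutcome I cu order i = some c ↔
      i ∈ eligibleUnmatched I (oaPhase1 I cu order) c ∧ oaRank I cu order c i < I.quota c := by
  refine ⟨oaOutcome_eq_some_of_ne hc, fun ⟨hi, hlt⟩ => ?_⟩
  rw [mem_eligibleUnmatched] at hi
  have hpref : ∃ c', c' ≠ cu ∧ I.Eligible i c' ∧
      #{j | I.Eligible j c' ∧ oaPhase1 I cu order j = none ∧ order.idxOf j < order.idxOf i} <
        I.quota c' := ⟨c, hc, hi.1, by rwa [card_filter_eq_oaRank]⟩
  simp only [oaOutcome, hi.2, reduceCtorEq, if_false, dif_pos hpref]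
  exact congrArg some (hone i _ c hpref.choose_spec.1 hc hpref.choose_spec.2.1 hi.1)

theorem oaOutcome_eq_none_iff {i : N} :
    oaOutcome I cu order i = none ↔ oaPhase1 I cu order i = none ∧
      ∀ c, c ≠ cu → I.Eligible i c → I.quota c ≤ oaRank I cu order c i := by
  unfold oaOutcome
  split_ifs with hcu hpref
  · simp [hcu]
  · obtain ⟨c, hc, helig, hlt⟩ := hpref
    simp only [false_iff, not_and, not_forall, not_le]
    exact fun _ => ⟨c, hc, helig, by rwa [← card_filter_eq_oaRank]⟩
  · push Not at hpref
    simp only [card_filter_eq_oaRank] at hpref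
    simpa [(oaPhase1_eq_none_or_eq_cu order i).resolve_right hcu] using hpref

theorem catCount_oaOutcome_cu :
    catCount (oaOutcome I cu order) cu = catCount (oaPhase1 I cu order) cu :=
  congrArg card (filter_congr fun i _ => oaOutcome_eq_some_cu_iff i)

theorem catCount_oaOutcome (hb : IsBaseline order) (hone : OneCategory I cu) {c : C}
    (hc : c ≠ cu) :
    catCount (oaOutcome I cu order) c =
      min (I.quota c) #(eligibleUnmatched I (oaPhase1 I cu order) c) := by
  have matched_c : ({i | oaOutcome I cu order i = some c} : Finset N) =
      {i ∈ eligibleUnmatched I (oaPhase1 I cu order) c | oaRank I cu order c i < I.quota c} := by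
    ext i
    simp [oaOutcome_eq_some_iff hone hc]
  rw [catCount, matched_c]
  exact card_filter_rank_lt_eq_min _ (fun x _ y _ h => (List.idxOf_inj (hb.2 x)).1 h) _

theorem oaRank_mono {c : C} {i j : N} (h : order.idxOf j ≤ order.idxOf i) :
    oaRank I cu order c j ≤ oaRank I cu order c i :=
  card_le_card fun _ hk => by
    simp only [mem_filter] at hk ⊢
    exact ⟨hk.1, hk.2.trans_le h⟩

theorem oaRank_le_card_erase (hb : IsBaseline order) (c : C) (i : N) :
    oaRank I cu order c i ≤ #((eligibleUnmatched I (oaPhase1Before I cu order i) c).erase i) :=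
  card_le_card fun k => by
    simp only [mem_filter, mem_eligibleUnmatched, mem_erase, oaPhase1Before_apply hb]
    grind

theorem exists_card_erase_lt_of_oaPhase1_eq_none (hb : IsBaseline order) {i : N}
    (hφ : oaPhase1 I cu order i = none)
    (hcount : catCount (oaPhase1Before I cu order i) cu < I.quota cu) :
    ∃ c, c ≠ cu ∧ I.Eligible i c ∧
      #((eligibleUnmatched I (oaPhase1Before I cu order i) c).erase i) < I.quota c := by
  have h : ¬TakesUnreserved I cu (oaPhase1Before I cu order i) i := by
    simp [← oaPhase1_eq_some_cu_iff hb, hφ]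
  simp only [TakesUnreserved, hcount, true_and, not_forall, not_le] at h
  simpa only [exists_prop] using h

theorem quota_cu_le_of_oaOutcome_eq_none (hb : IsBaseline order) {i : N}
    (h : oaOutcome I cu order i = none) :
    I.quota cu ≤ catCount (oaPhase1Before I cu order i) cu := by
  obtain ⟨hφ, hrank⟩ := oaOutcome_eq_none_iff.1 h
  by_contra! hcount
  obtain ⟨c, hc, helig, hlt⟩ := exists_card_erase_lt_of_oaPhase1_eq_none hb hφ hcount
  exact (hlt.trans_le ((hrank c hc helig).trans (oaRank_le_card_erase hb c i))).false

theorem isMatching_oaOutcome (hb : IsBaseline order) (hone : OneCategory I cu) :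
    I.IsMatching (oaOutcome I cu order) := by
  intro c
  change catCount _ c ≤ _
  rcases eq_or_ne c cu with rfl | hc
  · exact catCount_oaOutcome_cu.trans_le (catCount_oaPhase1_cu_le order)
  · exact (catCount_oaOutcome hb hone hc).trans_le (min_le_left _ _)

theorem complies_oaOutcome (hcuE : ∀ i : N, I.Eligible i cu) :
    Complies I (oaOutcome I cu order) := by
  intro i c h
  rcases eq_or_ne c cu with rfl | hc
  · exact hcuE i
  · exact (mem_eligibleUnmatched.1 (oaOutcome_eq_some_of_ne hc h).1).1

theorem maxBene_oaOutcome (hb : IsBaseline order) (hone : OneCategory I cu) :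
    MaxBene I cu (oaOutcome I cu order) := by
  refine fun ν hν hνc => beneCount_le_beneCount cu fun c hc => ?_
  have hν_eligible : catCount ν c ≤ #{j | I.Eligible j c} :=
    card_le_card fun i hi => by simp_all [hνc i c (mem_filter.1 hi).2]
  rw [catCount_oaOutcome hb hone hc]
  exact le_min (hν c) ((le_min (hν c) hν_eligible).trans
    (min_quota_le_card_eligibleUnmatched_oaPhase1 order hc))

theorem respectsPriorities_oaOutcome (hb : IsBaseline order) (hcuE : ∀ i : N, I.Eligible i cu)
    (hcons : Consistent I order) : RespectsPriorities I (oaOutcome I cu order) := by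
  rintro ⟨i, j, c, hi, hj, hji⟩
  rcases eq_or_ne c cu with rfl | hc
  · have hi_takes := (oaPhase1_eq_some_cu_iff hb i).1 ((oaOutcome_eq_some_cu_iff i).1 hi)
    have hidx := (hcons c j i (hcuE j) (hcuE i)).1 hji
    exact lt_irrefl _ (((quota_cu_le_of_oaOutcome_eq_none hb hj).trans
      (catCount_oaPhase1Before_mono hb hidx.le)).trans_lt hi_takes.1)
  · obtain ⟨hi_mem, hi_rank⟩ := oaOutcome_eq_some_of_ne hc hi
    have hi_elig : I.Eligible i c := (mem_eligibleUnmatched.1 hi_mem).1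
    have hj_elig := hi_elig.of_strict hji
    have hidx := (hcons c j i hj_elig hi_elig).1 hji
    exact lt_irrefl _ ((((oaOutcome_eq_none_iff.1 hj).2 c hc hj_elig).trans
      (oaRank_mono hidx.le)).trans_lt hi_rank)

theorem nonWasteful_oaOutcome (hb : IsBaseline order) (hone : OneCategory I cu) :
    NonWasteful I (oaOutcome I cu order) := by
  intro i c helig hi
  rcases eq_or_ne c cu with rfl | hc
  · rw [catCount_oaOutcome_cu]
    exact (catCount_oaPhase1_cu_le order).antisymm
      ((quota_cu_le_of_oaOutcome_eq_none hb hi).trans (catCount_oaPhase1Before_le hb i))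
  · rw [catCount_oaOutcome hb hone hc]
    exact min_eq_left (((oaOutcome_eq_none_iff.1 hi).2 c hc helig).trans (card_filter_le _ _))

theorem orderPreservingOA_oaOutcome (hb : IsBaseline order) (hcuE : ∀ i : N, I.Eligible i cu)
    (hcons : Consistent I order) (hone : OneCategory I cu) :
    OrderPreservingOA I cu (oaOutcome I cu order) := by
  intro i j ci cj hi hj hci hij hj_elig hcj
  rw [hcj] at hj hij
  have hj_takes := (oaPhase1_eq_some_cu_iff hb j).1 ((oaOutcome_eq_some_cu_iff j).1 hj)
  obtain ⟨hi_elig, hφi⟩ := mem_eligibleUnmatched.1 (oaOutcome_eq_some_of_ne hci hi).1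
  have hidx := (hcons cu i j (hcuE i) (hcuE j)).1 hij
  obtain ⟨c, hc, hi_elig', hi_short⟩ := exists_card_erase_lt_of_oaPhase1_eq_none hb hφi
    ((catCount_oaPhase1Before_mono hb hidx.le).trans_lt hj_takes.1)
  obtain rfl := hone i c ci hc hci hi_elig' hi_elig
  -- At `i`'s turn fewer than `q_c` others were left in the pool of `c`, at `j`'s later turn at
  -- least `q_c`; but the pool only shrinks.
  have hj_long := hj_takes.2 c hc hj_elig
  have hsub :=
    card_le_card (eligibleUnmatched_oaPhase1Before_anti (I := I) (cu := cu) hb hidx.le c)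
  rw [card_erase_of_mem (mem_eligibleUnmatched.2 ⟨hi_elig, oaPhase1Before_apply_self hb i⟩)]
    at hi_short
  rw [card_erase_of_mem (mem_eligibleUnmatched.2 ⟨hj_elig, oaPhase1Before_apply_self hb j⟩)]
    at hj_long
  omega

end OverAndAbove

/-- If each agent is eligible for at most one preferential category and all
categories' priorities are consistent with the baseline ordering, then the outcome of the
over-and-above rule (i) complies with the eligibility requirements, (ii) is a maximum
beneficiary assignment, (iii) respects priorities, (iv) is non-wasteful, and (v) is order
preserving for `q_{c_u^1} = q_{c_u}` and `q_{c_u^2} = 0`. -/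
theorem over_and_above_properties (I : Inst N C) (cu : C) (order : List N)
    (hb : IsBaseline order) (hcuE : ∀ i : N, I.Eligible i cu)
    (hcons : Consistent I order) (hone : OneCategory I cu) :
    I.IsMatching (oaOutcome I cu order) ∧
      Complies I (oaOutcome I cu order) ∧
      MaxBene I cu (oaOutcome I cu order) ∧
      RespectsPriorities I (oaOutcome I cu order) ∧
      NonWasteful I (oaOutcome I cu order) ∧
      OrderPreservingOA I cu (oaOutcome I cu order) :=
  ⟨isMatching_oaOutcome hb hone, complies_oaOutcome hcuE, maxBene_oaOutcome hb hone,
    respectsPriorities_oaOutcome hb hcuE hcons, nonWasteful_oaOutcome hb hone,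
    orderPreservingOA_oaOutcome hb hcuE hcons hone⟩
end
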